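/- arXiv:1108.4178 — 3 statements merged into one kernel-verified Lean document; each statement's English description precedes it below -/
import Mathlib

section
/- For any prime p ≥ 7, the binomial coefficient C(2p-1, p-1) ≡ 1 + 2p·∑_{k=1}^{p-1} 1/k (mod p⁵). -/
/-!
Work in `ℤ_[p]`, where `1 / k` is a unit for `0 < k < p`, and write
`C = (2p-1).choose (p-1) = ∏_{k=1}^{p-1} (1 + p/k)` and `Y = 1 + 2p ∑_{k=1}^{p-1} 1/k`.
Pairing `k` with `p - k` gives `C² = ∏ (1 + 2p² w_k)` and `Y = 1 + p² ∑ w_k`, where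
`w_k = 1/(k(p-k)) ≡ -1/k² (mod p)`. Expanding the product to second order,
`2(C² - Y²) ≡ 2p⁴((∑ w_k)² - 2 ∑ w_k²) (mod p⁶)`, and both `∑ w_k` and `∑ w_k²` vanish mod `p`
because `∑_{k=1}^{p-1} k^(-n) ≡ 0 (mod p)` for `0 < n < p - 1` (this is where `p ≥ 7` enters).
Hence `p⁵ ∣ 2(C² - Y²) = 2(C + Y)(C - Y)`, and `2(C + Y) ≡ 4 (mod p)` is a unit.
-/

/-- `a ≡ b (mod p^n)` in the `p`-adic sense for rationals. -/
def PadicCong (p : ℕ) (n : ℕ) (a b : ℚ) : Prop :=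
  padicNorm p (a - b) ≤ (p : ℚ) ^ (-(n : ℤ))

open Finset
open scoped Ring

theorem Nat.add_choose_mul_prod_Icc (n m : ℕ) :
    (n + m).choose m * ∏ k ∈ Icc 1 m, k = ∏ k ∈ Icc 1 m, (n + k) := by
  induction m with
  | zero => simp
  | succ m ih =>
    rw [prod_Icc_succ_top (by omega), prod_Icc_succ_top (by omega), ← ih, ← add_assoc,
      mul_left_comm, ← mul_assoc, mul_assoc _ _ (m + 1), ← Nat.add_one_mul_choose_eq]
    ring

@[to_additive]
theorem Finset.prod_Icc_sub_reflect {M : Type*} [CommMonoid M] (f : ℕ → M) (n : ℕ) :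
    ∏ k ∈ Icc 1 (n - 1), f (n - k) = ∏ k ∈ Icc 1 (n - 1), f k :=
  prod_nbij' (n - ·) (n - ·) (fun k hk => by simp only [mem_Icc] at hk ⊢; omega)
    (fun k hk => by simp only [mem_Icc] at hk ⊢; omega)
    (fun k hk => by simp only [mem_Icc] at hk; omega)
    (fun k hk => by simp only [mem_Icc] at hk; omega) fun _ _ => rfl

theorem map_ringInverse {F M₀ G₀ : Type*} [MonoidWithZero M₀] [GroupWithZero G₀] [FunLike F M₀ G₀]
    [MonoidHomClass F M₀ G₀] (f : F) {x : M₀} (hx : IsUnit x) : f x⁻¹ʳ = (f x)⁻¹ :=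
  eq_inv_of_mul_eq_one_right <| by rw [← map_mul, Ring.mul_inverse_cancel x hx, map_one]

theorem dvd_sub_of_dvd_two_mul_sq_sub_sq {R : Type*} [CommRing R] {a b c : R}
    (hu : IsUnit (2 * (a + b))) (h : c ∣ 2 * (a ^ 2 - b ^ 2)) : c ∣ a - b :=
  hu.dvd_mul_left.mp (by rwa [show 2 * (a + b) * (a - b) = 2 * (a ^ 2 - b ^ 2) by ring])

section RingInverse

variable {R : Type*} [CommRing R]

theorem Nat.cast_add_choose_eq_prod (n m : ℕ) (hm : ∀ k ∈ Icc 1 m, IsUnit (k : R)) :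
    ((n + m).choose m : R) = ∏ k ∈ Icc 1 m, (1 + n * (k : R)⁻¹ʳ) := by
  have hprod : IsUnit (∏ k ∈ Icc 1 m, (k : R)) := IsUnit.prod_iff.mpr hm
  rw [← hprod.mul_left_inj, ← prod_mul_distrib]
  calc ((n + m).choose m : R) * ∏ k ∈ Icc 1 m, (k : R) = ∏ k ∈ Icc 1 m, ((n + k : ℕ) : R) := by
        rw [← Nat.cast_prod, ← Nat.cast_mul, Nat.add_choose_mul_prod_Icc, Nat.cast_prod]
    _ = ∏ k ∈ Icc 1 m, (1 + n * (k : R)⁻¹ʳ) * k := prod_congr rfl fun k hk => by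
        push_cast
        linear_combination (-(n : R)) * Ring.inverse_mul_cancel _ (hm k hk)

variable {n : ℕ}

theorem Ring.inverse_add_inverse_sub (hn : ∀ k ∈ Icc 1 (n - 1), IsUnit (k : R)) {k : ℕ}
    (hk : k ∈ Icc 1 (n - 1)) :
    (k : R)⁻¹ʳ + ((n - k : ℕ) : R)⁻¹ʳ = n * ((k : R)⁻¹ʳ * ((n - k : ℕ) : R)⁻¹ʳ) := by
  have hk' : n - k ∈ Icc 1 (n - 1) := by simp only [mem_Icc] at hk ⊢; omega
  have hsum : (k : R) + ((n - k : ℕ) : R) = n := by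
    rw [← Nat.cast_add, Nat.add_sub_cancel' (by simp only [mem_Icc] at hk; omega)]
  linear_combination (-((n - k : ℕ) : R)⁻¹ʳ) * Ring.mul_inverse_cancel _ (hn k hk)
    - (k : R)⁻¹ʳ * Ring.mul_inverse_cancel _ (hn _ hk')
    + ((k : R)⁻¹ʳ * ((n - k : ℕ) : R)⁻¹ʳ) * hsum

theorem two_mul_sum_Icc_inverse (hn : ∀ k ∈ Icc 1 (n - 1), IsUnit (k : R)) :
    2 * ∑ k ∈ Icc 1 (n - 1), (k : R)⁻¹ʳ
      = n * ∑ k ∈ Icc 1 (n - 1), (k : R)⁻¹ʳ * ((n - k : ℕ) : R)⁻¹ʳ := by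
  rw [two_mul]
  nth_rewrite 2 [← sum_Icc_sub_reflect]
  rw [← sum_add_distrib, mul_sum]
  exact sum_congr rfl fun k hk => Ring.inverse_add_inverse_sub hn hk

theorem sq_prod_Icc_one_add_mul_inverse (hn : ∀ k ∈ Icc 1 (n - 1), IsUnit (k : R)) :
    (∏ k ∈ Icc 1 (n - 1), (1 + n * (k : R)⁻¹ʳ)) ^ 2
      = ∏ k ∈ Icc 1 (n - 1), (1 + 2 * n ^ 2 * ((k : R)⁻¹ʳ * ((n - k : ℕ) : R)⁻¹ʳ)) := by
  rw [sq]
  nth_rewrite 2 [← prod_Icc_sub_reflect]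
  rw [← prod_mul_distrib]
  exact prod_congr rfl fun k hk => by
    linear_combination (n : R) * Ring.inverse_add_inverse_sub hn hk

end RingInverse

section ProdOneAdd

variable {ι R : Type*} [CommRing R] (I : Ideal R) {s : Finset ι} {a : ι → R}

theorem Ideal.prod_one_add_sub_one_mem (ha : ∀ i ∈ s, a i ∈ I) : ∏ i ∈ s, (1 + a i) - 1 ∈ I := by
  induction s using Finset.cons_induction with
  | empty => simp
  | cons j s _ ih =>
    rw [prod_cons, show (1 + a j) * ∏ i ∈ s, (1 + a i) - 1
      = (∏ i ∈ s, (1 + a i) - 1) + a j * ∏ i ∈ s, (1 + a i) by ring]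
    exact I.add_mem (ih fun i hi => ha i (mem_cons_of_mem hi))
      (I.mul_mem_right _ (ha j (mem_cons_self j s)))

theorem Ideal.prod_one_add_sub_one_sub_sum_mem_sq (ha : ∀ i ∈ s, a i ∈ I) :
    ∏ i ∈ s, (1 + a i) - 1 - ∑ i ∈ s, a i ∈ I ^ 2 := by
  induction s using Finset.cons_induction with
  | empty => simp
  | cons j s _ ih =>
    have ha' : ∀ i ∈ s, a i ∈ I := fun i hi => ha i (mem_cons_of_mem hi)
    rw [prod_cons, sum_cons, show (1 + a j) * ∏ i ∈ s, (1 + a i) - 1 - (a j + ∑ i ∈ s, a i)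
      = (∏ i ∈ s, (1 + a i) - 1 - ∑ i ∈ s, a i) + a j * (∏ i ∈ s, (1 + a i) - 1) by ring]
    exact Ideal.add_mem _ (ih ha')
      (pow_two I ▸ Ideal.mul_mem_mul (ha j (mem_cons_self j s)) (I.prod_one_add_sub_one_mem ha'))

/-- Modulo `I³`, `∏ (1 + aᵢ) ≡ 1 + e₁ + e₂`, and `2 e₂ = e₁² - ∑ aᵢ²`. -/
theorem Ideal.two_mul_prod_one_add_sub_mem_pow_three (ha : ∀ i ∈ s, a i ∈ I) :
    2 * (∏ i ∈ s, (1 + a i) - 1 - ∑ i ∈ s, a i) - ((∑ i ∈ s, a i) ^ 2 - ∑ i ∈ s, a i ^ 2)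
      ∈ I ^ 3 := by
  induction s using Finset.cons_induction with
  | empty => simp
  | cons j s _ ih =>
    have ha' : ∀ i ∈ s, a i ∈ I := fun i hi => ha i (mem_cons_of_mem hi)
    have hj : a j * (∏ i ∈ s, (1 + a i) - 1 - ∑ i ∈ s, a i) ∈ I ^ 3 :=
      pow_succ' I 2 ▸ Ideal.mul_mem_mul (ha j (mem_cons_self j s))
        (I.prod_one_add_sub_one_sub_sum_mem_sq ha')
    rw [prod_cons, sum_cons, sum_cons]
    convert Ideal.add_mem _ (ih ha') ((I ^ 3).mul_mem_left 2 hj) using 1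
    ring

theorem pow_five_dvd_two_mul_prod_sub_sq {q : R} (w : ι → R) (h1 : q ∣ ∑ i ∈ s, w i)
    (h2 : q ∣ ∑ i ∈ s, w i ^ 2) :
    q ^ 5 ∣ 2 * (∏ i ∈ s, (1 + 2 * q ^ 2 * w i) - (1 + q ^ 2 * ∑ i ∈ s, w i) ^ 2) := by
  have h := (Ideal.span {q ^ 2}).two_mul_prod_one_add_sub_mem_pow_three (s := s)
    (a := fun i => 2 * q ^ 2 * w i) fun i _ =>
      Ideal.mem_span_singleton.mpr (Dvd.intro (2 * w i) (by ring))
  simp only [Ideal.span_singleton_pow, Ideal.mem_span_singleton, mul_pow, ← mul_sum] at h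
  obtain ⟨v, hv⟩ := h
  obtain ⟨t, ht⟩ := h1
  obtain ⟨u, hu⟩ := h2
  exact ⟨q * v + 2 * q * t ^ 2 - 4 * u, by
    linear_combination hv + 2 * q ^ 4 * (∑ i ∈ s, w i + q * t) * ht - 4 * q ^ 4 * hu⟩

end ProdOneAdd

theorem ZMod.sum_range_natCast {M : Type*} [AddCommMonoid M] (p : ℕ) [NeZero p]
    (f : ZMod p → M) : ∑ k ∈ range p, f k = ∑ x : ZMod p, f x :=
  sum_nbij' Nat.cast val (fun _ _ => mem_univ _) (fun x _ => mem_range.mpr x.val_lt)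
    (fun _ hk => val_cast_of_lt (mem_range.mp hk)) (fun x _ => natCast_zmod_val x) fun _ _ => rfl

theorem ZMod.sum_Icc_inv_pow_eq_zero {p : ℕ} [Fact p.Prime] {n : ℕ} (hn : n ≠ 0)
    (hnp : n < p - 1) : ∑ k ∈ Icc 1 (p - 1), ((k : ZMod p)⁻¹) ^ n = 0 := by
  have hp : 1 ≤ p := (Fact.out : p.Prime).one_le
  calc ∑ k ∈ Icc 1 (p - 1), ((k : ZMod p)⁻¹) ^ n
      = ∑ k ∈ range p, ((k : ZMod p)⁻¹) ^ n := by
        rw [sum_range_eq_add_Ico _ hp, Nat.cast_zero, inv_zero, zero_pow hn, zero_add,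
          ← Ico_add_one_right_eq_Icc, Nat.sub_add_cancel hp]
    _ = ∑ x : ZMod p, x⁻¹ ^ n := ZMod.sum_range_natCast p fun x => x⁻¹ ^ n
    _ = ∑ x : ZMod p, x ^ n := Fintype.sum_equiv (Equiv.inv _) _ _ fun _ => rfl
    _ = 0 := FiniteField.sum_pow_lt_card_sub_one _ _ (by rwa [ZMod.card])

namespace PadicInt

variable {p : ℕ} [Fact p.Prime]

theorem p_dvd_iff_toZMod_eq_zero {x : ℤ_[p]} : (p : ℤ_[p]) ∣ x ↔ toZMod x = 0 := by
  rw [← RingHom.mem_ker, ker_toZMod, maximalIdeal_eq_span_p, Ideal.mem_span_singleton]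

theorem isUnit_of_toZMod_ne_zero {x : ℤ_[p]} (hx : toZMod x ≠ 0) : IsUnit x := by
  rwa [← IsLocalRing.notMem_maximalIdeal, ← ker_toZMod, RingHom.mem_ker]

theorem isUnit_natCast_of_mem_Icc {k : ℕ} (hk : k ∈ Icc 1 (p - 1)) : IsUnit (k : ℤ_[p]) :=
  isUnit_of_toZMod_ne_zero <| by
    rw [map_natCast, Ne, ZMod.natCast_eq_zero_iff]
    simp only [mem_Icc] at hk
    exact Nat.not_dvd_of_pos_of_lt hk.1 (by omega)

theorem natCast_choose_eq_prod :
    ((2 * p - 1).choose (p - 1) : ℤ_[p]) = ∏ k ∈ Icc 1 (p - 1), (1 + p * (k : ℤ_[p])⁻¹ʳ) := by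
  rw [show 2 * p - 1 = p + (p - 1) by have := (Fact.out : p.Prime).one_le; omega]
  exact Nat.cast_add_choose_eq_prod p (p - 1) fun k hk => isUnit_natCast_of_mem_Icc hk

theorem toZMod_inverse_mul_inverse_sub {k : ℕ} (hk : k ∈ Icc 1 (p - 1)) :
    toZMod ((k : ℤ_[p])⁻¹ʳ * ((p - k : ℕ) : ℤ_[p])⁻¹ʳ) = -((k : ZMod p)⁻¹ ^ 2) := by
  have hk' : p - k ∈ Icc 1 (p - 1) := by simp only [mem_Icc] at hk ⊢; omega
  rw [map_mul, map_ringInverse _ (isUnit_natCast_of_mem_Icc hk),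
    map_ringInverse _ (isUnit_natCast_of_mem_Icc hk'), map_natCast, map_natCast,
    Nat.cast_sub ((mem_Icc.mp hk).2.trans (Nat.sub_le p 1)), ZMod.natCast_self, zero_sub, inv_neg]
  ring

theorem p_dvd_sum_inverse_mul_inverse_sub_pow {n : ℕ} (hn : n ≠ 0) (hnp : 2 * n < p - 1) :
    (p : ℤ_[p]) ∣ ∑ k ∈ Icc 1 (p - 1), ((k : ℤ_[p])⁻¹ʳ * ((p - k : ℕ) : ℤ_[p])⁻¹ʳ) ^ n := by
  rw [p_dvd_iff_toZMod_eq_zero, map_sum]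
  simp_rw [map_pow]
  rw [sum_congr rfl fun k hk => by rw [toZMod_inverse_mul_inverse_sub hk, neg_pow, ← pow_mul],
    ← mul_sum, ZMod.sum_Icc_inv_pow_eq_zero (by omega) hnp, mul_zero]

theorem pow_five_dvd_choose_sub (hp : 7 ≤ p) :
    (p : ℤ_[p]) ^ 5 ∣ ((2 * p - 1).choose (p - 1) : ℤ_[p])
      - (1 + 2 * p * ∑ k ∈ Icc 1 (p - 1), (k : ℤ_[p])⁻¹ʳ) := by
  have hunit : ∀ k ∈ Icc 1 (p - 1), IsUnit (k : ℤ_[p]) := fun k hk => isUnit_natCast_of_mem_Icc hk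
  have hS₁ := p_dvd_sum_inverse_mul_inverse_sub_pow (p := p) one_ne_zero (by omega)
  simp only [pow_one] at hS₁
  have key := pow_five_dvd_two_mul_prod_sub_sq _ hS₁
    (p_dvd_sum_inverse_mul_inverse_sub_pow (p := p) two_ne_zero (by omega))
  have hsum : (p : ℤ_[p]) ^ 2 * ∑ k ∈ Icc 1 (p - 1), (k : ℤ_[p])⁻¹ʳ * ((p - k : ℕ) : ℤ_[p])⁻¹ʳ
      = 2 * p * ∑ k ∈ Icc 1 (p - 1), (k : ℤ_[p])⁻¹ʳ := by
    rw [sq, mul_assoc, ← two_mul_sum_Icc_inverse hunit]; ring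
  rw [← sq_prod_Icc_one_add_mul_inverse hunit, ← natCast_choose_eq_prod, hsum] at key
  refine dvd_sub_of_dvd_two_mul_sq_sub_sq (isUnit_of_toZMod_ne_zero ?_) key
  rw [natCast_choose_eq_prod]
  simp only [map_mul, map_add, map_prod, map_one, map_ofNat, map_natCast, ZMod.natCast_self,
    mul_zero, zero_mul, add_zero, prod_const_one]
  rw [show (2 : ZMod p) * (1 + 1) = ((4 : ℕ) : ZMod p) by norm_num, Ne, ZMod.natCast_eq_zero_iff]
  exact Nat.not_dvd_of_pos_of_lt (by norm_num) (by omega)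

end PadicInt

theorem padicCong_of_pow_dvd_sub {p n : ℕ} [Fact p.Prime] {a b : ℚ} {x y : ℤ_[p]}
    (hx : (x : ℚ_[p]) = a) (hy : (y : ℚ_[p]) = b) (h : (p : ℤ_[p]) ^ n ∣ x - y) :
    PadicCong p n a b := by
  have := (PadicInt.norm_le_pow_iff_mem_span_pow (x - y) n).mpr (Ideal.mem_span_singleton.mpr h)
  rw [PadicInt.norm_def, PadicInt.coe_sub, hx, hy, ← Rat.cast_sub, Padic.eq_padicNorm] at this
  rwa [← Rat.cast_natCast, ← Rat.cast_zpow, Rat.cast_le] at this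

theorem stmt1 (p : ℕ) (hp : p.Prime) (h7 : 7 ≤ p) :
    PadicCong p 5 ((Nat.choose (2 * p - 1) (p - 1)) : ℚ) (1 + 2 * (p : ℚ) * (∑ k ∈ Finset.Icc 1 (p - 1), (1 : ℚ) / (k : ℚ))) := by
  have := Fact.mk hp
  refine padicCong_of_pow_dvd_sub ?_ ?_ (PadicInt.pow_five_dvd_choose_sub h7)
  · simp
  · push_cast [PadicInt.coe_sum]
    refine congrArg _ (congrArg _ (sum_congr rfl fun k hk => ?_))
    rw [one_div]
    exact map_ringInverse PadicInt.Coe.ringHom (PadicInt.isUnit_natCast_of_mem_Icc hk)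
end

section
/- For a prime p ≥ 7, the congruence C(2p-1, p-1) ≡ 1 (mod p⁴) holds if and only if ∑_{k=1}^{p-1} 1/k² ≡ 0 (mod p²). -/
open Finset

section PadicNorm

variable {p : ℕ} [Fact p.Prime]

theorem padicNorm_le_iff_of_padicNorm_sub_le {x y ε : ℚ} (h : padicNorm p (x - y) ≤ ε) :
    padicNorm p x ≤ ε ↔ padicNorm p y ≤ ε := by
  constructor
  · intro hx
    calc padicNorm p y = padicNorm p (x - (x - y)) := by rw [sub_sub_cancel]
      _ ≤ max (padicNorm p x) (padicNorm p (x - y)) := padicNorm.sub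
      _ ≤ ε := max_le hx h
  · intro hy
    calc padicNorm p x = padicNorm p (y + (x - y)) := by rw [add_sub_cancel]
      _ ≤ max (padicNorm p y) (padicNorm p (x - y)) := padicNorm.nonarchimedean
      _ ≤ ε := max_le hy h

theorem padicNorm_two (hp2 : p ≠ 2) : padicNorm p 2 = 1 := by
  have h := (padicNorm.nat_eq_one_iff (p := p) 2).mpr fun hdvd =>
    hp2 ((Nat.prime_dvd_prime_iff_eq Fact.out Nat.prime_two).mp hdvd)
  exact_mod_cast h

theorem padicNorm_natCast_eq_one {k : ℕ} (hk0 : 0 < k) (hkp : k < p) : padicNorm p k = 1 :=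
  (padicNorm.nat_eq_one_iff k).mpr fun hdvd => (Nat.le_of_dvd hk0 hdvd).not_gt hkp

theorem padicNorm_sq_sub_one_eq (hp2 : p ≠ 2) {x : ℚ} (hx : padicNorm p (x - 1) < 1) :
    padicNorm p (x ^ 2 - 1) = padicNorm p (x - 1) := by
  have hx1 : padicNorm p (x + 1) = 1 := by
    have hne : padicNorm p 2 ≠ padicNorm p (x - 1) := by rw [padicNorm_two hp2]; exact hx.ne'
    rw [show x + 1 = 2 + (x - 1) by ring, padicNorm.add_eq_max_of_ne hne, padicNorm_two hp2,
      max_eq_left (padicNorm_two hp2 ▸ hx.le)]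
  rw [show x ^ 2 - 1 = (x - 1) * (x + 1) by ring, padicNorm.mul, hx1, mul_one]

variable {ι : Type*} {s : Finset ι} {f : ι → ℚ} {c : ℚ}

theorem padicNorm_prod_one_add_sub_one_le (hc0 : 0 ≤ c) (hc1 : c ≤ 1)
    (hf : ∀ i ∈ s, padicNorm p (f i) ≤ c) : padicNorm p (∏ i ∈ s, (1 + f i) - 1) ≤ c := by
  classical
  induction s using Finset.induction_on with
  | empty => simpa using hc0
  | insert a s ha ih =>
    have ih := ih fun i hi => hf i (mem_insert_of_mem hi)
    have hP : padicNorm p (∏ i ∈ s, (1 + f i)) ≤ 1 := by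
      calc padicNorm p (∏ i ∈ s, (1 + f i))
          = padicNorm p ((∏ i ∈ s, (1 + f i) - 1) + 1) := by rw [sub_add_cancel]
        _ ≤ max c 1 := padicNorm.nonarchimedean.trans (max_le_max ih padicNorm.one.le)
        _ = 1 := max_eq_right hc1
    rw [prod_insert ha, show ∀ P : ℚ, (1 + f a) * P - 1 = (P - 1) + f a * P by intros; ring]
    refine padicNorm.nonarchimedean.trans (max_le ih ?_)
    rw [padicNorm.mul]
    simpa using mul_le_mul (hf a (mem_insert_self a s)) hP (padicNorm.nonneg _) hc0

theorem padicNorm_prod_one_add_sub_one_sub_sum_le (hc0 : 0 ≤ c) (hc1 : c ≤ 1)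
    (hf : ∀ i ∈ s, padicNorm p (f i) ≤ c) :
    padicNorm p (∏ i ∈ s, (1 + f i) - 1 - ∑ i ∈ s, f i) ≤ c * c := by
  classical
  induction s using Finset.induction_on with
  | empty => simpa using mul_nonneg hc0 hc0
  | insert a s ha ih =>
    have hfs : ∀ i ∈ s, padicNorm p (f i) ≤ c := fun i hi => hf i (mem_insert_of_mem hi)
    rw [prod_insert ha, sum_insert ha, show ∀ P S : ℚ,
      (1 + f a) * P - 1 - (f a + S) = (P - 1 - S) + f a * (P - 1) by intros; ring]
    refine padicNorm.nonarchimedean.trans (max_le (ih hfs) ?_)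
    rw [padicNorm.mul]
    exact mul_le_mul (hf a (mem_insert_self a s)) (padicNorm_prod_one_add_sub_one_le hc0 hc1 hfs)
      (padicNorm.nonneg _) hc0

end PadicNorm

theorem Nat.cast_choose_add_eq_prod {K : Type*} [Field K] [CharZero K] (n m : ℕ) :
    (Nat.choose (n + m) m : K) = ∏ k ∈ Icc 1 m, (1 + (n : K) / k) := by
  induction m with
  | zero => simp
  | succ m ih =>
    rw [prod_Icc_succ_top (by omega), ← ih]
    have h := congrArg (Nat.cast : ℕ → K) (Nat.add_one_mul_choose_eq (n + m) m)
    push_cast at h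
    have hm : (m : K) + 1 ≠ 0 := by exact_mod_cast m.succ_ne_zero
    rw [← add_assoc]
    push_cast
    field_simp
    linear_combination -h

@[to_additive]
theorem Finset.prod_Icc_reflect {M : Type*} [CommMonoid M] (n : ℕ) (f : ℕ → M) :
    ∏ k ∈ Icc 1 (n - 1), f (n - k) = ∏ k ∈ Icc 1 (n - 1), f k := by
  refine prod_nbij' (n - ·) (n - ·) ?_ ?_ ?_ ?_ fun _ _ => rfl <;> intro k hk <;>
    simp only [mem_Icc] at * <;> omega

theorem cast_sub_eq_and_ne_zero_of_mem_Icc {p k : ℕ} (hk : k ∈ Icc 1 (p - 1)) :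
    ((p - k : ℕ) : ℚ) = p - k ∧ (k : ℚ) ≠ 0 ∧ (p : ℚ) - k ≠ 0 := by
  rw [mem_Icc] at hk
  have hcast : ((p - k : ℕ) : ℚ) = p - k := Nat.cast_sub (by omega)
  refine ⟨hcast, by exact_mod_cast (show k ≠ 0 by omega), ?_⟩
  rw [← hcast]
  exact_mod_cast (show p - k ≠ 0 by omega)

theorem cast_choose_two_mul_sub_one_eq_prod {p : ℕ} (hp : 1 ≤ p) :
    (Nat.choose (2 * p - 1) (p - 1) : ℚ) = ∏ k ∈ Icc 1 (p - 1), (1 + (p : ℚ) / k) := by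
  rw [show 2 * p - 1 = p + (p - 1) by omega]
  exact Nat.cast_choose_add_eq_prod p (p - 1)

theorem cast_choose_two_mul_sub_one_sq_eq_prod {p : ℕ} (hp : 1 ≤ p) :
    (Nat.choose (2 * p - 1) (p - 1) : ℚ) ^ 2 =
      ∏ k ∈ Icc 1 (p - 1), (1 + 2 * (p : ℚ) ^ 2 * (1 / (k * (p - k)))) := by
  rw [sq, cast_choose_two_mul_sub_one_eq_prod hp]
  nth_rw 2 [← prod_Icc_reflect p fun k => 1 + (p : ℚ) / k]
  rw [← prod_mul_distrib]
  refine prod_congr rfl fun k hk => ?_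
  obtain ⟨hcast, hk0, hpk⟩ := cast_sub_eq_and_ne_zero_of_mem_Icc hk
  rw [hcast]
  field_simp
  ring

theorem two_mul_sum_one_div_mul_sub_add_two_mul_sum_one_div_sq (p : ℕ) :
    2 * ∑ k ∈ Icc 1 (p - 1), 1 / ((k : ℚ) * (p - k)) + 2 * ∑ k ∈ Icc 1 (p - 1), 1 / (k : ℚ) ^ 2 =
      (p : ℚ) ^ 2 * ∑ k ∈ Icc 1 (p - 1), 1 / ((k : ℚ) * (p - k)) ^ 2 := by
  rw [two_mul (∑ k ∈ Icc 1 (p - 1), 1 / ((k : ℕ) : ℚ) ^ 2)]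
  nth_rw 2 [← sum_Icc_reflect p fun k => 1 / (k : ℚ) ^ 2]
  rw [mul_sum, mul_sum, ← sum_add_distrib, ← sum_add_distrib]
  refine sum_congr rfl fun k hk => ?_
  obtain ⟨hcast, hk0, hpk⟩ := cast_sub_eq_and_ne_zero_of_mem_Icc hk
  rw [hcast]
  field_simp
  ring

section Prime

variable {p : ℕ} [hp : Fact p.Prime]

theorem padicNorm_one_div_mul_sub_eq_one {k : ℕ} (hk : k ∈ Icc 1 (p - 1)) :
    padicNorm p (1 / ((k : ℚ) * (p - k))) = 1 := by
  obtain ⟨hcast, -⟩ := cast_sub_eq_and_ne_zero_of_mem_Icc hk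
  rw [mem_Icc] at hk
  rw [← hcast, padicNorm.div, padicNorm.mul, padicNorm.one,
    padicNorm_natCast_eq_one (by omega) (by omega), padicNorm_natCast_eq_one (by omega) (by omega),
    mul_one, div_one]

theorem padicNorm_two_mul_sq (hp2 : p ≠ 2) : padicNorm p (2 * (p : ℚ) ^ 2) = (p : ℚ)⁻¹ ^ 2 := by
  rw [padicNorm.mul, padicNorm_two hp2, one_mul, IsAbsoluteValue.abv_pow (padicNorm p),
    padicNorm.padicNorm_p_of_prime]

theorem padicNorm_cast_choose_two_mul_sub_one_sub_one_le :
    padicNorm p ((Nat.choose (2 * p - 1) (p - 1) : ℚ) - 1) ≤ (p : ℚ)⁻¹ := by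
  rw [cast_choose_two_mul_sub_one_eq_prod hp.out.one_le]
  refine padicNorm_prod_one_add_sub_one_le (by positivity)
    (inv_le_one_of_one_le₀ (by exact_mod_cast hp.out.one_le)) fun k hk => ?_
  rw [mem_Icc] at hk
  rw [padicNorm.div, padicNorm.padicNorm_p_of_prime,
    padicNorm_natCast_eq_one (by omega) (by omega), div_one]

theorem padicNorm_cast_choose_two_mul_sub_one_sq_sub_one_sub_sum_le (hp2 : p ≠ 2) :
    padicNorm p ((Nat.choose (2 * p - 1) (p - 1) : ℚ) ^ 2 - 1 -
      ∑ k ∈ Icc 1 (p - 1), 2 * (p : ℚ) ^ 2 * (1 / (k * (p - k)))) ≤ (p : ℚ)⁻¹ ^ 4 := by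
  rw [cast_choose_two_mul_sub_one_sq_eq_prod hp.out.one_le,
    show (p : ℚ)⁻¹ ^ 4 = (p : ℚ)⁻¹ ^ 2 * (p : ℚ)⁻¹ ^ 2 by ring]
  refine padicNorm_prod_one_add_sub_one_sub_sum_le (by positivity)
    (pow_le_one₀ (by positivity) (inv_le_one_of_one_le₀ (by exact_mod_cast hp.out.one_le)))
    fun k hk => ?_
  rw [padicNorm.mul, padicNorm_two_mul_sq hp2, padicNorm_one_div_mul_sub_eq_one hk, mul_one]

theorem padicNorm_cast_choose_two_mul_sub_one_sq_sub_one_add_le (hp2 : p ≠ 2) :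
    padicNorm p ((Nat.choose (2 * p - 1) (p - 1) : ℚ) ^ 2 - 1 +
      2 * p ^ 2 * ∑ k ∈ Icc 1 (p - 1), 1 / (k : ℚ) ^ 2) ≤ (p : ℚ)⁻¹ ^ 4 := by
  set C : ℚ := (Nat.choose (2 * p - 1) (p - 1) : ℚ)
  set X := ∑ k ∈ Icc 1 (p - 1), 1 / ((k : ℚ) * (p - k)) ^ 2
  have hX : padicNorm p X ≤ 1 := padicNorm.sum_le' (fun k hk => by
    rw [← one_div_pow, IsAbsoluteValue.abv_pow (padicNorm p),
      padicNorm_one_div_mul_sub_eq_one hk, one_pow]) zero_le_one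
  have hX4 : padicNorm p ((p : ℚ) ^ 4 * X) ≤ (p : ℚ)⁻¹ ^ 4 := by
    rw [padicNorm.mul, IsAbsoluteValue.abv_pow (padicNorm p), padicNorm.padicNorm_p_of_prime]
    exact mul_le_of_le_one_right (by positivity) hX
  calc padicNorm p (C ^ 2 - 1 + 2 * p ^ 2 * ∑ k ∈ Icc 1 (p - 1), 1 / (k : ℚ) ^ 2)
      = padicNorm p ((C ^ 2 - 1 - ∑ k ∈ Icc 1 (p - 1), 2 * (p : ℚ) ^ 2 * (1 / (k * (p - k))))
          + (p : ℚ) ^ 4 * X) := by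
        rw [← mul_sum]
        congr 1
        linear_combination (p : ℚ) ^ 2 * two_mul_sum_one_div_mul_sub_add_two_mul_sum_one_div_sq p
    _ ≤ (p : ℚ)⁻¹ ^ 4 := padicNorm.nonarchimedean.trans
        (max_le (padicNorm_cast_choose_two_mul_sub_one_sq_sub_one_sub_sum_le hp2) hX4)

end Prime

theorem stmt4 (p : ℕ) (hp : p.Prime) (h7 : 7 ≤ p) :
    PadicCong p 4 ((Nat.choose (2 * p - 1) (p - 1)) : ℚ) 1 ↔ PadicCong p 2 (∑ k ∈ Finset.Icc 1 (p - 1), (1 : ℚ) / (k : ℚ) ^ 2) 0 := by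
  have : Fact p.Prime := ⟨hp⟩
  have hp2 : p ≠ 2 := by omega
  have hpow (n : ℕ) : (p : ℚ) ^ (-(n : ℤ)) = (p : ℚ)⁻¹ ^ n := by rw [zpow_neg, zpow_natCast, inv_pow]
  have hC1 : padicNorm p ((Nat.choose (2 * p - 1) (p - 1) : ℚ) - 1) < 1 :=
    padicNorm_cast_choose_two_mul_sub_one_sub_one_le.trans_lt
      (inv_lt_one_of_one_lt₀ (by exact_mod_cast hp.one_lt))
  have hcong := padicNorm_cast_choose_two_mul_sub_one_sq_sub_one_add_le hp2
  rw [← sub_neg_eq_add] at hcong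
  unfold PadicCong
  rw [sub_zero, hpow, hpow, ← padicNorm_sq_sub_one_eq hp2 hC1,
    padicNorm_le_iff_of_padicNorm_sub_le hcong, padicNorm.neg, padicNorm.mul,
    padicNorm_two_mul_sq hp2, show (p : ℚ)⁻¹ ^ 4 = (p : ℚ)⁻¹ ^ 2 * (p : ℚ)⁻¹ ^ 2 by ring]
  exact mul_le_mul_iff_of_pos_left (by positivity)
end

section
/- For any prime p and any positive integer r, 2·∑_{k=1}^{p-1} 1/k ≡ -∑_{i=1}^{r} p^i · ∑_{k=1}^{p-1} 1/k^{i+1} (mod p^{r+1}). -/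
/-!
Pairing `k` with `p - k`, the left side minus the right side is a sum over `0 < k < p` of
`1/k + 1/(p-k) + ∑_{i=1}^r p^i/k^(i+1)`. This is a truncated geometric series in `p/k`, which
sums to `-p^(r+1) / (k^(r+1) (k - p))`; since `k` and `k - p` are `p`-adic units, every term has
`p`-adic norm exactly `p^-(r+1)`, and the ultrametric inequality finishes.
-/

open Finset

theorem Finset.sum_Icc_one_sub_reflect {M : Type*} [AddCommMonoid M] (f : ℕ → M) (n : ℕ) :
    ∑ k ∈ Icc 1 (n - 1), f (n - k) = ∑ k ∈ Icc 1 (n - 1), f k := by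
  refine sum_nbij' (n - ·) (n - ·) ?_ ?_ ?_ ?_ ?_ <;> intro k hk <;>
    simp only [mem_Icc] at hk ⊢ <;> omega

theorem sum_one_div_natCast_reflect {K : Type*} [DivisionRing K] (n : ℕ) :
    ∑ k ∈ Icc 1 (n - 1), 1 / (k : K) = ∑ k ∈ Icc 1 (n - 1), 1 / ((n : K) - k) := by
  rw [← sum_Icc_one_sub_reflect]
  refine sum_congr rfl fun k hk => ?_
  rw [Nat.cast_sub (by simp only [mem_Icc] at hk; omega)]

theorem one_div_add_one_div_sub_add_sum_pow_div {K : Type*} [Field K] {a b : K} (ha : a ≠ 0)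
    (hab : a ≠ b) (r : ℕ) :
    1 / a + 1 / (b - a) + ∑ j ∈ Icc 1 r, b ^ j / a ^ (j + 1)
      = -b ^ (r + 1) / (a ^ (r + 1) * (a - b)) := by
  have hab' : a - b ≠ 0 := sub_ne_zero.mpr hab
  have hba : b - a ≠ 0 := sub_ne_zero.mpr hab.symm
  induction r with
  | zero =>
    rw [Icc_eq_empty (by omega), sum_empty, add_zero]
    field_simp
    ring
  | succ r ih =>
    rw [sum_Icc_succ_top (by omega), ← add_assoc, ih]
    field_simp
    ring

section padicNorm

variable {p : ℕ} [Fact p.Prime]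

theorem padicNorm_natCast_pow_self (n : ℕ) :
    padicNorm p ((p : ℚ) ^ n) = (p : ℚ) ^ (-(n : ℤ)) := by
  rw [IsAbsoluteValue.abv_pow (padicNorm p), padicNorm.padicNorm_p_of_prime, inv_pow, zpow_neg,
    zpow_natCast]

theorem padicNorm_natCast_of_pos_of_lt {k : ℕ} (hk : 0 < k) (hkp : k < p) :
    padicNorm p k = 1 :=
  (padicNorm.nat_eq_one_iff k).mpr (Nat.not_dvd_of_pos_of_lt hk hkp)

theorem padicNorm_natCast_sub_self_of_pos_of_lt {k : ℕ} (hk : 0 < k) (hkp : k < p) :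
    padicNorm p ((k : ℚ) - p) = 1 := by
  have hcast : (k : ℚ) - p = ((k - p : ℤ) : ℚ) := by push_cast; ring
  rw [hcast, padicNorm.int_eq_one_iff, dvd_sub_self_right]
  exact_mod_cast Nat.not_dvd_of_pos_of_lt hk hkp

theorem padicNorm_neg_pow_self_div_pow_mul_sub {k : ℕ} (hk : 0 < k) (hkp : k < p) (n : ℕ) :
    padicNorm p (-(p : ℚ) ^ n / ((k : ℚ) ^ n * ((k : ℚ) - p))) = (p : ℚ) ^ (-(n : ℤ)) := by
  rw [neg_div, padicNorm.neg, padicNorm.div, padicNorm.mul, padicNorm_natCast_pow_self,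
    IsAbsoluteValue.abv_pow (padicNorm p), padicNorm_natCast_of_pos_of_lt hk hkp,
    padicNorm_natCast_sub_self_of_pos_of_lt hk hkp, one_pow, mul_one, div_one]

end padicNorm

theorem stmt16_general (p : ℕ) (hp : p.Prime) (r : ℕ) :
    PadicCong p (r + 1) (2 * (∑ k ∈ Finset.Icc 1 (p - 1), (1 : ℚ) / (k : ℚ)))
      (-(∑ i ∈ Finset.Icc 1 r, (p : ℚ) ^ i *
          ∑ k ∈ Finset.Icc 1 (p - 1), (1 : ℚ) / (k : ℚ) ^ (i + 1))) := by
  have := Fact.mk hp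
  have hrange : ∀ k ∈ Icc 1 (p - 1), 0 < k ∧ k < p := fun k hk => by
    simp only [mem_Icc] at hk; omega
  have hpaired : 2 * ∑ k ∈ Icc 1 (p - 1), (1 : ℚ) / k
      + ∑ i ∈ Icc 1 r, (p : ℚ) ^ i * ∑ k ∈ Icc 1 (p - 1), 1 / (k : ℚ) ^ (i + 1)
      = ∑ k ∈ Icc 1 (p - 1), -(p : ℚ) ^ (r + 1) / ((k : ℚ) ^ (r + 1) * ((k : ℚ) - p)) := by
    rw [two_mul]
    nth_rewrite 2 [sum_one_div_natCast_reflect]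
    simp_rw [mul_sum, mul_one_div]
    rw [sum_comm, ← sum_add_distrib, ← sum_add_distrib]
    refine sum_congr rfl fun k hk => ?_
    obtain ⟨hk0, hkp⟩ := hrange k hk
    exact one_div_add_one_div_sub_add_sum_pow_div (by positivity) (by exact_mod_cast hkp.ne) r
  unfold PadicCong
  rw [sub_neg_eq_add, hpaired]
  refine padicNorm.sum_le' (fun k hk => ?_) (by positivity)
  obtain ⟨hk0, hkp⟩ := hrange k hk
  exact (padicNorm_neg_pow_self_div_pow_mul_sub hk0 hkp (r + 1)).le

theorem stmt16 (p : ℕ) (hp : p.Prime) (r : ℕ) (hr : 1 ≤ r) :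
    PadicCong p (r + 1) (2 * (∑ k ∈ Finset.Icc 1 (p - 1), (1 : ℚ) / (k : ℚ)))
      (-(∑ i ∈ Finset.Icc 1 r, (p : ℚ) ^ i *
          ∑ k ∈ Finset.Icc 1 (p - 1), (1 : ℚ) / (k : ℚ) ^ (i + 1))) :=
  stmt16_general p hp r
end
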